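/- Let (\tilde{β}_n) be a sequence of random variables with n^{1/2}(\tilde{β}_n - β₀) bounded in probability and β₀ ≠ 0. Let λ_n > 0 with n^{1/2}λ_n → 0, and γ > 0. Then δ̂_n = min(1, λ_n/|\tilde{β}_n|^{1+γ}) satisfies n^{1/2} δ̂_n → 0 in probability. -/
import Mathlib


open Filter MeasureTheory

/-- If √n(β̃_n - β₀) is bounded in probability with β₀ ≠ 0,
λ_n > 0 with √n λ_n → 0, and γ > 0, then the smooth-threshold weight
δ̂_n = min(1, λ_n/|β̃_n|^{1+γ}) satisfies √n δ̂_n → 0 in probability. -/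
theorem smooth_threshold_nonzero_coefficient
    {Ω : Type*} [MeasurableSpace Ω] (μ : Measure Ω) [IsProbabilityMeasure μ]
    (βt : ℕ → Ω → ℝ) (hmeas : ∀ n, Measurable (βt n)) (β₀ : ℝ) (hβ₀ : β₀ ≠ 0)
    (hOp : ∀ ε : ℝ, 0 < ε → ∃ C : ℝ, ∀ n : ℕ,
      μ {ω | C ≤ Real.sqrt n * |βt n ω - β₀|} ≤ ENNReal.ofReal ε)
    (lam : ℕ → ℝ) (hlam : ∀ n, 0 < lam n)
    (hrate : Tendsto (fun n : ℕ => Real.sqrt n * lam n) atTop (nhds 0))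
    (γ : ℝ) (hγ : 0 < γ) :
    ∀ ε : ℝ, 0 < ε →
      Tendsto (fun n : ℕ =>
          μ {ω | ε ≤ Real.sqrt n * min 1 (lam n / |βt n ω| ^ (1 + γ))})
        atTop (nhds 0) := by
  intro ε hε
  rw [ENNReal.tendsto_nhds_zero]
  intro ε' hε'
  obtain ⟨δ', hδ'pos, hδ'le⟩ : ∃ δ' : ℝ, 0 < δ' ∧ ENNReal.ofReal δ' ≤ ε' := by
    rcases eq_or_ne ε' ⊤ with h | h
    · exact ⟨1, one_pos, by simp [h]⟩
    · exact ⟨ε'.toReal, ENNReal.toReal_pos hε'.ne' h,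
        by rw [ENNReal.ofReal_toReal h]⟩
  obtain ⟨C, hC⟩ := hOp δ' hδ'pos
  have hβ₀pos : 0 < |β₀| := abs_pos.mpr hβ₀
  set b : ℝ := (|β₀| / 2) ^ (1 + γ) with hb
  have hbpos : 0 < b := Real.rpow_pos_of_pos (by linarith) _
  have hsqrt : Tendsto (fun n : ℕ => Real.sqrt n * (|β₀| / 2)) atTop atTop := by
    apply Tendsto.atTop_mul_const (by linarith : (0:ℝ) < |β₀| / 2)
    have : Tendsto (fun x : ℝ => x ^ (1/2 : ℝ)) atTop atTop :=
      tendsto_rpow_atTop (by norm_num)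
    refine (this.comp tendsto_natCast_atTop_atTop).congr fun n => ?_
    simp only [Function.comp]
    rw [Real.sqrt_eq_rpow]
  have h1 : ∀ᶠ n : ℕ in atTop, C ≤ Real.sqrt n * (|β₀| / 2) :=
    hsqrt.eventually_ge_atTop C
  have h2 : ∀ᶠ n : ℕ in atTop, Real.sqrt n * lam n < ε * b :=
    hrate.eventually_lt_const (by positivity)
  filter_upwards [h1, h2] with n hn1 hn2
  refine le_trans (measure_mono ?_) (le_trans (hC n) hδ'le)
  intro ω hω
  simp only [Set.mem_setOf_eq] at hω ⊢
  by_contra hcon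
  push_neg at hcon
  have hsn : 0 ≤ Real.sqrt n := Real.sqrt_nonneg _
  have hd : |βt n ω - β₀| < |β₀| / 2 := by
    rcases lt_or_eq_of_le hsn with hsp | hsz
    · have := hcon.trans_le hn1
      exact lt_of_mul_lt_mul_left this hsn
    · exfalso
      rw [← hsz, zero_mul] at hω
      linarith
  have habs : |β₀| / 2 ≤ |βt n ω| := by
    have := abs_sub_abs_le_abs_sub β₀ (βt n ω)
    rw [abs_sub_comm] at this
    linarith
  have hpow : b ≤ |βt n ω| ^ (1 + γ) :=
    Real.rpow_le_rpow (by linarith) habs (by linarith)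
  have hdiv : lam n / |βt n ω| ^ (1 + γ) ≤ lam n / b :=
    div_le_div_of_nonneg_left (hlam n).le hbpos hpow
  have : Real.sqrt n * min 1 (lam n / |βt n ω| ^ (1 + γ)) ≤ Real.sqrt n * (lam n / b) :=
    mul_le_mul_of_nonneg_left ((min_le_right _ _).trans hdiv) hsn
  have hlt : Real.sqrt n * (lam n / b) < ε := by
    rw [mul_div_assoc'] at *
    exact (div_lt_iff₀ hbpos).mpr (by nlinarith)
  linarith [hω.trans this]
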